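/- arXiv:2411.02694 — 4 statements merged into one kernel-verified Lean document; each statement's English description precedes it below -/
import Mathlib

section
/- Under the physical-intensity assumption, the vector field G(z) = E[Σ_{t=1}^{N} (φ(h·Λ_t(z;y)) − y_t)·η_t(y)] is κ-strongly monotone on Θ_K: for all z, z̃ ∈ Θ_K, ⟨G(z) − G(z̃), z − z̃⟩ ≥ κ·‖z − z̃‖₂², where κ = e^{-h·b}·b·h²·e^{-B·τ_max}. -/
/-!
Write `Δ = z - z'`. Since `⟪η_t(y), Δ⟫ = Λ_t(z;y) - Λ_t(z';y)` and `x ↦ φ(h x)` has slope at least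
`h e^{-hB}` on `(-∞, B]`, pointwise `⟪Ĝ(z;y) - Ĝ(z';y), Δ⟫ ≥ h e^{-hB} ∑_t ⟪η_t(y), Δ⟫²`.
When the only event of `y` in `t - N', …, t - 1` is at `i`, `⟪η_t(y), Δ⟫² = Δ_{i,t}²`, and by the
chain rule this happens with probability at least `φ(hb) e^{-hB(N'-1)} ≥ hb e^{-hb} e^{-hB(N'-1)}`:
given the past, an event has probability `φ(hΛ*_t) ≥ φ(hb)`, a non-event `e^{-hΛ*_t} ≥ e^{-hB}`.
Summing over `(i, t)` gives `‖Δ‖²`. The intensity bounds are only assumed on trajectories of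
positive probability, but by induction on time every trajectory has positive probability.
-/

open Finset
open scoped BigOperators RealInnerProductSpace

noncomputable section

/-- Real value of a Boolean: `1` if `true`, `0` if `false`. -/
def bval (b : Bool) : ℝ := if b then 1 else 0

/-- The time window of indices `-N'+1, …, N`. -/
def window (N N' : ℕ) : Finset ℤ := Finset.Icc (-(N' : ℤ) + 1) (N : ℤ)

/-- The probability mass function of the discrete-time Bernoulli process with
true conditional intensities `Λ`. -/
def seqPMF (N N' : ℕ) (h : ℝ) (Λ : ℤ → (ℤ → Bool) → ℝ) (y : ℤ → Bool) : ℝ :=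
  ∏ t ∈ window N N',
    ((1 - bval (y t)) * Real.exp (-(h * Λ t y))
      + bval (y t) * (1 - Real.exp (-(h * Λ t y))))

/-- Extension of a window-indexed binary sequence to all of `ℤ` (by `false`). -/
def extSeq (N N' : ℕ) (w : ↥(window N N') → Bool) : ℤ → Bool :=
  fun i => if hi : i ∈ window N N' then w ⟨i, hi⟩ else false

/-- Expectation with respect to the law of the process. -/
def expect (N N' : ℕ) (h : ℝ) (Λ : ℤ → (ℤ → Bool) → ℝ) (f : (ℤ → Bool) → ℝ) : ℝ :=
  ∑ w : ↥(window N N') → Bool, seqPMF N N' h Λ (extSeq N N' w) * f (extSeq N N' w)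

/-- The index set of the kernel parameter: pairs `(i, t)` with `1 ≤ t ≤ N` and
`t - N' ≤ i ≤ t - 1`. -/
def kIdx (N N' : ℕ) : Finset (ℤ × ℤ) :=
  (Finset.Icc (-(N' : ℤ) + 1) (N : ℤ) ×ˢ Finset.Icc 1 (N : ℤ)).filter
    (fun p => p.2 - (N' : ℤ) ≤ p.1 ∧ p.1 ≤ p.2 - 1)

/-- The space `ℝ^{N·N'}` of kernel parameters, with Euclidean structure. -/
abbrev Param (N N' : ℕ) := EuclideanSpace ℝ ↥(kIdx N N')

/-- Entry `z_{i,t}` of a kernel parameter (zero outside the index set). -/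
def zent (N N' : ℕ) (z : Param N N') (i t : ℤ) : ℝ :=
  if hm : (i, t) ∈ kIdx N N' then z ⟨(i, t), hm⟩ else 0

/-- The model intensity `Λ_t(z; y) = μ + ∑_{i = t-N'}^{t-1} y_i z_{i,t}`. -/
def modelIntensity (N N' : ℕ) (μ : ℝ) (z : Param N N') (t : ℤ) (y : ℤ → Bool) : ℝ :=
  μ + ∑ i ∈ Finset.Icc (t - (N' : ℤ)) (t - 1), bval (y i) * zent N N' z i t

/-- The history vector `η_t(y)`: entry `y_i` at index `(i, t)`, zero elsewhere. -/
def eta (N N' : ℕ) (t : ℤ) (y : ℤ → Bool) : Param N N' :=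
  WithLp.toLp 2 (fun p : ↥(kIdx N N') => if p.1.2 = t then bval (y p.1.1) else 0)

/-- The link function `φ(x) = 1 - e^{-x}`. -/
def phi (x : ℝ) : ℝ := 1 - Real.exp (-x)

/-- The per-trajectory VI vector field
`Ĝ(z; y) = ∑_{t=1}^N (φ(h Λ_t(z;y)) - y_t) η_t(y)`. -/
def Ghat (N N' : ℕ) (h μ : ℝ) (z : Param N N') (y : ℤ → Bool) : Param N N' :=
  ∑ t ∈ Finset.Icc (1 : ℤ) (N : ℤ),
    (phi (h * modelIntensity N N' μ z t y) - bval (y t)) • eta N N' t y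

/-- Expectation of a vector-valued statistic with respect to the law of the process. -/
def expectVec {E : Type*} [AddCommMonoid E] [Module ℝ E]
    (N N' : ℕ) (h : ℝ) (Λ : ℤ → (ℤ → Bool) → ℝ) (f : (ℤ → Bool) → E) : E :=
  ∑ w : ↥(window N N') → Bool, seqPMF N N' h Λ (extSeq N N' w) • f (extSeq N N' w)

def Predictable (N N' : ℕ) (Λ : ℤ → (ℤ → Bool) → ℝ) : Prop :=
  ∀ (t : ℤ) (y y' : ℤ → Bool), (∀ i ∈ window N N', i < t → y i = y' i) → Λ t y = Λ t y'

def seqOf (S : Finset ℤ) : ℤ → Bool := fun i => decide (i ∈ S)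

def pmfFactor (h : ℝ) (Λ : ℤ → (ℤ → Bool) → ℝ) (t : ℤ) (y : ℤ → Bool) : ℝ :=
  if y t then phi (h * Λ t y) else Real.exp (-(h * Λ t y))

section ChainRule

lemma seqOf_insert_of_lt {S : Finset ℤ} {t i : ℤ} (hi : i < t) :
    seqOf (insert t S) i = seqOf S i := by
  simp [seqOf, hi.ne]

/-- Chain rule for causal factors: lower bounds `c t` on the conditional masses
`g t (y with no event at t) + g t (y with an event at t)`, uniform in the past, multiply up. -/
theorem prod_le_sum_powerset_prod (g : ℤ → (ℤ → Bool) → ℝ) (c : ℤ → ℝ) {lo hi : ℤ}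
    (hlo : lo - 1 ≤ hi) (hg : ∀ t y y', (∀ i ≤ t, y i = y' i) → g t y = g t y')
    (hg0 : ∀ t ∈ Icc lo hi, ∀ y, 0 ≤ g t y) (hc0 : ∀ t ∈ Icc lo hi, 0 ≤ c t)
    (hc : ∀ t ∈ Icc lo hi, ∀ S, t ∉ S → c t ≤ g t (seqOf S) + g t (seqOf (insert t S))) :
    ∏ t ∈ Icc lo hi, c t ≤ ∑ S ∈ (Icc lo hi).powerset, ∏ t ∈ Icc lo hi, g t (seqOf S) := by
  induction hi, hlo using Int.leInduction with
  | base => simp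
  | succ k hk ih =>
    have hIcc : Icc lo (k + 1) = insert (k + 1) (Icc lo k) :=
      (insert_Icc_right_eq_Icc_add_one (by omega)).symm
    have hk1 : k + 1 ∉ Icc lo k := by simp
    have hsub : Icc lo k ⊆ Icc lo (k + 1) := Icc_subset_Icc_right (by omega)
    have hlast : k + 1 ∈ Icc lo (k + 1) := mem_Icc.mpr ⟨by omega, le_rfl⟩
    have hpast : ∀ S, ∏ t ∈ Icc lo k, g t (seqOf (insert (k + 1) S)) =
        ∏ t ∈ Icc lo k, g t (seqOf S) := fun S =>
      prod_congr rfl fun t ht => hg t _ _ fun i hi =>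
        seqOf_insert_of_lt (by rw [mem_Icc] at ht; omega)
    rw [hIcc, prod_insert hk1, sum_powerset_insert hk1, ← sum_add_distrib]
    simp only [prod_insert hk1, hpast]
    calc c (k + 1) * ∏ t ∈ Icc lo k, c t
        ≤ c (k + 1) * ∑ S ∈ (Icc lo k).powerset, ∏ t ∈ Icc lo k, g t (seqOf S) :=
          mul_le_mul_of_nonneg_left
            (ih (fun t ht => hg0 t (hsub ht)) (fun t ht => hc0 t (hsub ht))
              (fun t ht => hc t (hsub ht)))
            (hc0 _ hlast)
      _ ≤ ∑ S ∈ (Icc lo k).powerset,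
            (g (k + 1) (seqOf S) + g (k + 1) (seqOf (insert (k + 1) S))) *
              ∏ t ∈ Icc lo k, g t (seqOf S) := by
          rw [mul_sum]
          refine sum_le_sum fun S hS => mul_le_mul_of_nonneg_right ?_
            (prod_nonneg fun t ht => hg0 t (hsub ht) _)
          exact hc _ hlast S fun hmem => by simpa using mem_powerset.mp hS hmem
      _ = _ := by simp only [add_mul]

end ChainRule

lemma phi_pos {x : ℝ} (hx : 0 < x) : 0 < phi x := by
  simpa [phi] using hx

lemma phi_nonneg {x : ℝ} (hx : 0 ≤ x) : 0 ≤ phi x := by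
  simpa [phi] using hx

lemma phi_mono {x x' : ℝ} (hxx' : x ≤ x') : phi x ≤ phi x' := by
  unfold phi
  linarith [Real.exp_le_exp.mpr (neg_le_neg hxx')]

lemma mul_exp_neg_le_phi (x : ℝ) : x * Real.exp (-x) ≤ phi x := by
  have h1 : (x + 1) * Real.exp (-x) ≤ Real.exp x * Real.exp (-x) :=
    mul_le_mul_of_nonneg_right (Real.add_one_le_exp x) (Real.exp_pos _).le
  rw [← Real.exp_add, add_neg_cancel, Real.exp_zero] at h1
  unfold phi
  linarith

/-- `x ↦ φ(h x)` is strongly monotone on `(-∞, B]`, with modulus its smallest slope there. -/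
lemma mul_sq_le_phi_sub_mul {h B a a' : ℝ} (hh : 0 ≤ h) (ha : a ≤ B) (ha' : a' ≤ B) :
    h * Real.exp (-(h * B)) * (a - a') ^ 2 ≤ (phi (h * a) - phi (h * a')) * (a - a') := by
  wlog hle : a' ≤ a generalizing a a'
  · linarith [this ha' ha (by linarith)]
  have hslope : h * (a - a') ≤ Real.exp (h * (a - a')) - 1 := by
    linarith [Real.add_one_le_exp (h * (a - a'))]
  have hdiff :
      phi (h * a) - phi (h * a') = Real.exp (-(h * a)) * (Real.exp (h * (a - a')) - 1) := by
    rw [phi, phi, mul_sub, ← Real.exp_add]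
    ring_nf
  have hexp : Real.exp (-(h * B)) ≤ Real.exp (-(h * a)) :=
    Real.exp_le_exp.mpr (by nlinarith)
  rw [hdiff]
  have hd : 0 ≤ a - a' := by linarith
  calc h * Real.exp (-(h * B)) * (a - a') ^ 2
      = Real.exp (-(h * B)) * (h * (a - a')) * (a - a') := by ring
    _ ≤ Real.exp (-(h * a)) * (Real.exp (h * (a - a')) - 1) * (a - a') := by
      gcongr

section Law

variable {N N' : ℕ} {h : ℝ} {Λ : ℤ → (ℤ → Bool) → ℝ}

lemma seqPMF_eq_prod_pmfFactor (y : ℤ → Bool) :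
    seqPMF N N' h Λ y = ∏ t ∈ window N N', pmfFactor h Λ t y := by
  refine prod_congr rfl fun t _ => ?_
  cases hy : y t <;> simp [pmfFactor, bval, phi, hy]

lemma pmfFactor_congr (hΛ : Predictable N N' Λ) {t : ℤ} {y y' : ℤ → Bool}
    (hy : ∀ i ≤ t, y i = y' i) : pmfFactor h Λ t y = pmfFactor h Λ t y' := by
  rw [pmfFactor, pmfFactor, hy t le_rfl, hΛ t y y' fun i _ hi => hy i hi.le]

lemma pmfFactor_of_false {t : ℤ} {y : ℤ → Bool} (hy : y t = false) :
    pmfFactor h Λ t y = Real.exp (-(h * Λ t y)) := by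
  simp [pmfFactor, hy]

lemma pmfFactor_of_true {t : ℤ} {y : ℤ → Bool} (hy : y t = true) :
    pmfFactor h Λ t y = phi (h * Λ t y) := by
  simp [pmfFactor, hy]

lemma pmfFactor_pos {t : ℤ} {y : ℤ → Bool} (hΛ : 0 < h * Λ t y) : 0 < pmfFactor h Λ t y := by
  unfold pmfFactor
  split_ifs
  exacts [phi_pos hΛ, Real.exp_pos _]

lemma pmfFactor_nonneg {t : ℤ} {y : ℤ → Bool} (hΛ : 0 ≤ h * Λ t y) :
    0 ≤ pmfFactor h Λ t y := by
  unfold pmfFactor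
  split_ifs
  exacts [phi_nonneg hΛ, (Real.exp_pos _).le]

/-- By induction on `t`: the past of a trajectory before `t`, followed by no events, has positive
probability, so the intensity bound applies at time `t`. -/
theorem seqPMF_pos {b B : ℝ} (hh : 0 < h) (hb : 0 < b) (hΛ : Predictable N N' Λ)
    (hstar : ∀ t ∈ window N N', ∀ y : ℤ → Bool,
      0 < seqPMF N N' h Λ y → b ≤ Λ t y ∧ Λ t y ≤ B) (y : ℤ → Bool) :
    0 < seqPMF N N' h Λ y := by
  suffices key : ∀ k, -(N' : ℤ) + 1 ≤ k →
      ∀ t ∈ window N N', t < k → ∀ x, 0 < pmfFactor h Λ t x by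
    rw [seqPMF_eq_prod_pmfFactor]
    exact prod_pos fun t ht => key (N + 1) (by omega) t ht (by rw [window, mem_Icc] at ht; omega) y
  intro k hk
  induction k, hk using Int.leInduction with
  | base => intro t ht htk; rw [window, mem_Icc] at ht; omega
  | succ k hk ih =>
    intro t ht htk x
    obtain htk | rfl : t < k ∨ t = k := by omega
    · exact ih t ht htk x
    set past : ℤ → Bool := fun i => decide (i < t) && x i
    have hpast : ∀ i < t, past i = x i := fun i hi => by simp [past, hi]
    have hpast_pos : 0 < seqPMF N N' h Λ past := by
      rw [seqPMF_eq_prod_pmfFactor]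
      refine prod_pos fun s hs => ?_
      rcases lt_or_ge s t with hst | hts
      · rw [pmfFactor_congr hΛ fun i hi => hpast i (by omega)]
        exact ih s hs hst x
      · rw [pmfFactor_of_false (by simp [past, not_lt.mpr hts])]
        exact Real.exp_pos _
    have hΛt : Λ t x = Λ t past := hΛ t x past fun i _ hi => (hpast i hi).symm
    exact pmfFactor_pos (by rw [hΛt]; nlinarith [(hstar t ht past hpast_pos).1])

lemma seqPMF_nonneg {b : ℝ} (hh : 0 ≤ h) (hb : 0 ≤ b)
    (hΛ : ∀ t ∈ window N N', ∀ y, b ≤ Λ t y) (y : ℤ → Bool) : 0 ≤ seqPMF N N' h Λ y := by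
  rw [seqPMF_eq_prod_pmfFactor]
  exact prod_nonneg fun t ht => pmfFactor_nonneg (by nlinarith [hΛ t ht y])

lemma expect_eq_sum_powerset (f : (ℤ → Bool) → ℝ) :
    expect N N' h Λ f =
      ∑ S ∈ (window N N').powerset, seqPMF N N' h Λ (seqOf S) * f (seqOf S) := by
  refine sum_nbij' (fun w => {i ∈ window N N' | extSeq N N' w i}) (fun S p => decide (p.1 ∈ S))
    (fun w _ => mem_powerset.mpr (filter_subset _ _)) (fun _ _ => mem_univ _) ?_ ?_ ?_
  · intro w _
    funext p
    simp [extSeq, p.2]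
  · intro S hS
    ext i
    by_cases hi : i ∈ window N N'
    · simp [extSeq, hi]
    · simpa [extSeq, hi] using fun hiS => hi (mem_powerset.mp hS hiS)
  · intro w _
    have : extSeq N N' w = seqOf {i ∈ window N N' | extSeq N N' w i} := by
      funext i
      by_cases hi : i ∈ window N N' <;> simp [extSeq, seqOf, hi]
    exact congrArg (fun y => seqPMF N N' h Λ y * f y) this

lemma expect_mono (hpmf : ∀ y, 0 ≤ seqPMF N N' h Λ y) {f g : (ℤ → Bool) → ℝ}
    (hfg : ∀ y, f y ≤ g y) : expect N N' h Λ f ≤ expect N N' h Λ g :=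
  sum_le_sum fun _ _ => mul_le_mul_of_nonneg_left (hfg _) (hpmf _)

lemma expect_sum {ι : Type*} (s : Finset ι) (f : ι → (ℤ → Bool) → ℝ) :
    expect N N' h Λ (fun y => ∑ i ∈ s, f i y) = ∑ i ∈ s, expect N N' h Λ (f i) := by
  simp only [_root_.expect, mul_sum]
  exact sum_comm

lemma expect_const_mul (c : ℝ) (f : (ℤ → Bool) → ℝ) :
    expect N N' h Λ (fun y => c * f y) = c * expect N N' h Λ f := by
  simp only [_root_.expect, mul_sum]
  exact sum_congr rfl fun _ _ => mul_left_comm _ _ _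

lemma inner_expectVec_sub {E : Type*} [NormedAddCommGroup E] [InnerProductSpace ℝ E]
    (f g : (ℤ → Bool) → E) (v : E) :
    ⟪expectVec N N' h Λ f - expectVec N N' h Λ g, v⟫ =
      expect N N' h Λ (fun y => ⟪f y - g y, v⟫) := by
  simp only [expectVec, _root_.expect, ← sum_sub_distrib, sum_inner, ← smul_sub,
    real_inner_smul_left]

end Law

section Param

variable {N N' : ℕ}

lemma mem_kIdx {p : ℤ × ℤ} :
    p ∈ kIdx N N' ↔ p.2 ∈ Icc 1 (N : ℤ) ∧ p.1 ∈ Icc (p.2 - N') (p.2 - 1) := by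
  simp only [kIdx, mem_filter, mem_product, mem_Icc]
  omega

lemma inner_eq_sum_zent (u v : Param N N') :
    ⟪u, v⟫ = ∑ t ∈ Icc 1 (N : ℤ), ∑ i ∈ Icc (t - N') (t - 1),
      zent N N' u i t * zent N N' v i t := by
  rw [PiLp.inner_apply, ← sum_finset_product_right' (kIdx N N') _ _ (fun _ => mem_kIdx)
    (f := fun i t => zent N N' u i t * zent N N' v i t), ← sum_coe_sort (kIdx N N')]
  refine sum_congr rfl fun p _ => ?_
  simp [zent, mul_comm]

lemma norm_sq_eq_sum_zent (x : Param N N') :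
    ‖x‖ ^ 2 = ∑ t ∈ Icc 1 (N : ℤ), ∑ i ∈ Icc (t - N') (t - 1), zent N N' x i t ^ 2 := by
  rw [← real_inner_self_eq_norm_sq, inner_eq_sum_zent]
  simp only [sq]

lemma zent_eta (t : ℤ) (y : ℤ → Bool) (i s : ℤ) :
    zent N N' (eta N N' t y) i s = if (i, s) ∈ kIdx N N' ∧ s = t then bval (y i) else 0 := by
  unfold zent
  by_cases hm : (i, s) ∈ kIdx N N' <;> simp [hm, eta]

lemma inner_eta {t : ℤ} (ht : t ∈ Icc 1 (N : ℤ)) (y : ℤ → Bool) (x : Param N N') :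
    ⟪eta N N' t y, x⟫ = ∑ i ∈ Icc (t - N') (t - 1), bval (y i) * zent N N' x i t := by
  rw [inner_eq_sum_zent, sum_eq_single_of_mem t ht fun s _ hst => sum_eq_zero fun i _ => ?_]
  · exact sum_congr rfl fun i hi => by rw [zent_eta, if_pos ⟨mem_kIdx.mpr ⟨ht, hi⟩, rfl⟩]
  · rw [zent_eta, if_neg (fun hmem => hst hmem.2), zero_mul]

lemma modelIntensity_eq_add_inner (μ : ℝ) (z : Param N N') {t : ℤ} (ht : t ∈ Icc 1 (N : ℤ))
    (y : ℤ → Bool) : modelIntensity N N' μ z t y = μ + ⟪eta N N' t y, z⟫ := by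
  rw [modelIntensity, inner_eta ht]

lemma Icc_sub_subset_window {t : ℤ} (ht : t ∈ Icc 1 (N : ℤ)) :
    Icc (t - N') (t - 1) ⊆ window N N' := by
  intro i hi
  rw [mem_Icc] at ht hi
  rw [window, mem_Icc]
  omega

end Param

lemma sum_sq_mul_indicator_le_sq_sum (M : Finset ℤ) (a : ℤ → ℝ) (y : ℤ → Bool) :
    ∑ i ∈ M, a i ^ 2 * (if ∀ j ∈ M, y j = decide (j = i) then 1 else 0)
      ≤ (∑ i ∈ M, bval (y i) * a i) ^ 2 := by
  by_cases hex : ∃ i ∈ M, ∀ j ∈ M, y j = decide (j = i)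
  · obtain ⟨i, hi, hyi⟩ := hex
    have hsum : ∑ j ∈ M, bval (y j) * a j = a i := by
      rw [sum_eq_single_of_mem i hi fun j hj hji => by simp [bval, hyi j hj, hji]]
      simp [bval, hyi i hi]
    rw [sum_eq_single_of_mem i hi, if_pos hyi, hsum, mul_one]
    intro j hj hji
    rw [if_neg fun hyj => hji (by simpa [hyi i hi, eq_comm] using hyj i hi), mul_zero]
  · push Not at hex
    rw [sum_eq_zero fun i hi => by
      obtain ⟨j, hj, hyj⟩ := hex i hi
      rw [if_neg fun hall => hyj (hall j hj), mul_zero]]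
    positivity

section Monotonicity

variable {N N' : ℕ} {h : ℝ} {Λ : ℤ → (ℤ → Bool) → ℝ} {b B : ℝ}

/-- Whatever happened before, each time of `M` contributes at least the probability `φ(hb)` of
an event (at `i`) or `e^{-hB}` of none (elsewhere). -/
theorem phi_mul_le_expect_single_event (hh : 0 ≤ h) (hb : 0 ≤ b) (hΛ : Predictable N N' Λ)
    (hbounds : ∀ t ∈ window N N', ∀ y, b ≤ Λ t y ∧ Λ t y ≤ B)
    {M : Finset ℤ} (hM : M ⊆ window N N') {i : ℤ} (hi : i ∈ M) :
    phi (h * b) * Real.exp (-(h * B)) ^ (M.card - 1) ≤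
      expect N N' h Λ (fun y => if ∀ j ∈ M, y j = decide (j = i) then 1 else 0) := by
  set g : ℤ → (ℤ → Bool) → ℝ := fun t y =>
    pmfFactor h Λ t y * if t ∈ M → y t = decide (t = i) then 1 else 0
  set c : ℤ → ℝ := fun t =>
    if t ∈ M then (if t = i then phi (h * b) else Real.exp (-(h * B))) else 1
  have hprod_c : ∏ t ∈ window N N', c t = phi (h * b) * Real.exp (-(h * B)) ^ (M.card - 1) := by
    rw [prod_ite_mem, inter_eq_right.mpr hM, ← mul_prod_erase M _ hi, if_pos rfl,
      prod_congr rfl fun t ht => if_neg (ne_of_mem_erase ht), prod_const, card_erase_of_mem hi]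
  have hprod_g : ∀ S, ∏ t ∈ window N N', g t (seqOf S) =
      seqPMF N N' h Λ (seqOf S) * if ∀ j ∈ M, seqOf S j = decide (j = i) then 1 else 0 := by
    intro S
    rw [prod_mul_distrib, ← seqPMF_eq_prod_pmfFactor, prod_boole]
    congr 1
    exact if_congr ⟨fun hall j hj => hall j (hM hj) hj, fun hall t _ ht => hall t ht⟩ rfl rfl
  have hg : ∀ t y y', (∀ j ≤ t, y j = y' j) → g t y = g t y' := fun t y y' hy => by
    simp only [g, pmfFactor_congr hΛ hy, hy t le_rfl]
  have hc : ∀ t ∈ window N N', ∀ S, t ∉ S →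
      c t ≤ g t (seqOf S) + g t (seqOf (insert t S)) := by
    intro t ht S htS
    have hno : seqOf S t = false := by simp [seqOf, htS]
    have hyes : seqOf (insert t S) t = true := by simp [seqOf]
    have hΛt : Λ t (seqOf (insert t S)) = Λ t (seqOf S) :=
      hΛ _ _ _ fun j _ hj => seqOf_insert_of_lt hj
    obtain ⟨hbΛ, hΛB⟩ := hbounds t ht (seqOf S)
    simp only [g, c, pmfFactor_of_false hno, pmfFactor_of_true hyes, hΛt, hno, hyes]
    by_cases htM : t ∈ M
    · by_cases hti : t = i
      · subst hti
        simpa [htM] using phi_mono (mul_le_mul_of_nonneg_left hbΛ hh)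
      · simpa [htM, hti] using Real.exp_le_exp.mpr (neg_le_neg (mul_le_mul_of_nonneg_left hΛB hh))
    · simp [htM, phi]
  rw [expect_eq_sum_powerset, ← hprod_c]
  simp only [← hprod_g]
  refine prod_le_sum_powerset_prod g c (by omega) hg (fun t ht y => ?_) (fun t _ => ?_) hc
  · exact mul_nonneg (pmfFactor_nonneg (by nlinarith [(hbounds t ht y).1])) (by positivity)
  · simp only [c]
    split_ifs
    exacts [phi_nonneg (by positivity), (Real.exp_pos _).le, zero_le_one]

theorem phi_mul_sum_sq_le_expect_sq (hh : 0 ≤ h) (hb : 0 ≤ b) (hΛ : Predictable N N' Λ)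
    (hbounds : ∀ t ∈ window N N', ∀ y, b ≤ Λ t y ∧ Λ t y ≤ B)
    {M : Finset ℤ} (hM : M ⊆ window N N') (a : ℤ → ℝ) :
    phi (h * b) * Real.exp (-(h * B)) ^ (M.card - 1) * ∑ i ∈ M, a i ^ 2 ≤
      expect N N' h Λ (fun y => (∑ i ∈ M, bval (y i) * a i) ^ 2) := by
  have hpmf := seqPMF_nonneg hh hb fun t ht y => (hbounds t ht y).1
  calc _ = ∑ i ∈ M, a i ^ 2 * (phi (h * b) * Real.exp (-(h * B)) ^ (M.card - 1)) := by
        rw [mul_sum]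
        exact sum_congr rfl fun _ _ => mul_comm _ _
    _ ≤ ∑ i ∈ M, a i ^ 2 *
          expect N N' h Λ (fun y => if ∀ j ∈ M, y j = decide (j = i) then 1 else 0) :=
        sum_le_sum fun i hi => mul_le_mul_of_nonneg_left
          (phi_mul_le_expect_single_event hh hb hΛ hbounds hM hi) (sq_nonneg _)
    _ = expect N N' h Λ
          (fun y => ∑ i ∈ M, a i ^ 2 * if ∀ j ∈ M, y j = decide (j = i) then 1 else 0) := by
        rw [expect_sum]
        simp only [expect_const_mul]
    _ ≤ _ := expect_mono hpmf fun y => sum_sq_mul_indicator_le_sq_sum M a y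

lemma mul_sum_sq_le_inner_Ghat_sub (hh : 0 ≤ h) {μ : ℝ} {z z' : Param N N'} {y : ℤ → Bool}
    (hB : ∀ t ∈ Icc 1 (N : ℤ),
      modelIntensity N N' μ z t y ≤ B ∧ modelIntensity N N' μ z' t y ≤ B) :
    h * Real.exp (-(h * B)) * ∑ t ∈ Icc 1 (N : ℤ), ⟪eta N N' t y, z - z'⟫ ^ 2 ≤
      ⟪Ghat N N' h μ z y - Ghat N N' h μ z' y, z - z'⟫ := by
  simp only [Ghat, ← sum_sub_distrib, ← sub_smul, sum_inner, real_inner_smul_left, mul_sum]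
  refine sum_le_sum fun t ht => ?_
  have hdiff : ⟪eta N N' t y, z - z'⟫ =
      modelIntensity N N' μ z t y - modelIntensity N N' μ z' t y := by
    rw [modelIntensity_eq_add_inner μ z ht, modelIntensity_eq_add_inner μ z' ht, inner_sub_right]
    ring
  rw [hdiff]
  linarith [mul_sq_le_phi_sub_mul hh (hB t ht).1 (hB t ht).2]

lemma monotonicity_constant_le (hh : 0 ≤ h) (hN' : 1 ≤ N') :
    Real.exp (-(h * b)) * b * h ^ 2 * Real.exp (-(B * ((N' : ℝ) * h))) ≤
      h * Real.exp (-(h * B)) * (phi (h * b) * Real.exp (-(h * B)) ^ (N' - 1)) := by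
  have hpow : Real.exp (-(h * B)) * Real.exp (-(h * B)) ^ (N' - 1) =
      Real.exp (-(B * ((N' : ℝ) * h))) := by
    rw [← pow_succ', Nat.sub_add_cancel hN', ← Real.exp_nat_mul]
    ring_nf
  calc _ = h * (h * b * Real.exp (-(h * b))) * Real.exp (-(B * ((N' : ℝ) * h))) := by ring
    _ ≤ h * phi (h * b) * Real.exp (-(B * ((N' : ℝ) * h))) := by
      gcongr
      exact mul_exp_neg_le_phi _
    _ = _ := by rw [← hpow]; ring

end Monotonicity

theorem G_strongly_monotone_general
    (N N' : ℕ) (hN' : 1 ≤ N') (h : ℝ) (hh : 0 < h)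
    (Λ : ℤ → (ℤ → Bool) → ℝ)
    (hdep : ∀ (t : ℤ) (y y' : ℤ → Bool),
      (∀ i ∈ window N N', i < t → y i = y' i) → Λ t y = Λ t y')
    (μ : ℝ)
    (b B : ℝ) (hb : 0 < b)
    (hstar : ∀ t ∈ window N N', ∀ y : ℤ → Bool,
      0 < seqPMF N N' h Λ y → b ≤ Λ t y ∧ Λ t y ≤ B)
    (ΘK : Set (Param N N'))
    (hphys : ∀ z ∈ ΘK, ∀ t ∈ Finset.Icc (1 : ℤ) (N : ℤ), ∀ y : ℤ → Bool,
      b ≤ modelIntensity N N' μ z t y ∧ modelIntensity N N' μ z t y ≤ B) :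
    ∀ z ∈ ΘK, ∀ z' ∈ ΘK,
      ⟪expectVec N N' h Λ (fun y => Ghat N N' h μ z y)
          - expectVec N N' h Λ (fun y => Ghat N N' h μ z' y), z - z'⟫
        ≥ (Real.exp (-(h * b)) * b * h ^ 2 * Real.exp (-(B * ((N' : ℝ) * h))))
            * ‖z - z'‖ ^ 2 := by
  intro z hz z' hz'
  have hpmf : ∀ y, 0 < seqPMF N N' h Λ y := seqPMF_pos hh hb hdep hstar
  have hbounds : ∀ t ∈ window N N', ∀ y, b ≤ Λ t y ∧ Λ t y ≤ B :=
    fun t ht y => hstar t ht y (hpmf y)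
  rw [ge_iff_le, inner_expectVec_sub]
  calc _ ≤ h * Real.exp (-(h * B)) *
          (phi (h * b) * Real.exp (-(h * B)) ^ (N' - 1) * ‖z - z'‖ ^ 2) :=
        (mul_le_mul_of_nonneg_right (monotonicity_constant_le hh.le hN')
          (sq_nonneg ‖z - z'‖)).trans_eq (mul_assoc _ _ _)
    _ ≤ h * Real.exp (-(h * B)) *
          ∑ t ∈ Icc 1 (N : ℤ), expect N N' h Λ (fun y => ⟪eta N N' t y, z - z'⟫ ^ 2) := by
        rw [norm_sq_eq_sum_zent, mul_sum]
        gcongr with t ht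
        have hcard : (Icc (t - N') (t - 1)).card = N' := by simp
        simpa [hcard, inner_eta ht] using phi_mul_sum_sq_le_expect_sq hh.le hb.le hdep hbounds
          (Icc_sub_subset_window ht)
          (fun i => zent N N' (z - z') i t)
    _ = expect N N' h Λ (fun y => h * Real.exp (-(h * B)) *
          ∑ t ∈ Icc 1 (N : ℤ), ⟪eta N N' t y, z - z'⟫ ^ 2) := by
        rw [expect_const_mul, expect_sum]
    _ ≤ _ := expect_mono (fun y => (hpmf y).le) fun y => mul_sum_sq_le_inner_Ghat_sub hh.le
        fun t ht => ⟨(hphys z hz t ht y).2, (hphys z' hz' t ht y).2⟩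

/-- strong monotonicity of the VI vector field. -/
theorem G_strongly_monotone
    (N N' : ℕ) (hN : 1 ≤ N) (hN' : 1 ≤ N') (h : ℝ) (hh : 0 < h)
    (Λ : ℤ → (ℤ → Bool) → ℝ)
    (hdep : ∀ (t : ℤ) (y y' : ℤ → Bool),
      (∀ i ∈ window N N', i < t → y i = y' i) → Λ t y = Λ t y')
    (μ : ℝ) (hμ : 0 < μ)
    (b B : ℝ) (hb : 0 < b) (hbB : b ≤ B)
    (hstar : ∀ t ∈ window N N', ∀ y : ℤ → Bool,
      0 < seqPMF N N' h Λ y → b ≤ Λ t y ∧ Λ t y ≤ B)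
    (ΘK : Set (Param N N')) (hne : ΘK.Nonempty)
    (hcomp : IsCompact ΘK) (hconv : Convex ℝ ΘK)
    (zstar : Param N N') (hzs : zstar ∈ ΘK)
    (htrue : ∀ t ∈ Finset.Icc (1 : ℤ) (N : ℤ), ∀ y : ℤ → Bool,
      Λ t y = modelIntensity N N' μ zstar t y)
    (hphys : ∀ z ∈ ΘK, ∀ t ∈ Finset.Icc (1 : ℤ) (N : ℤ), ∀ y : ℤ → Bool,
      b ≤ modelIntensity N N' μ z t y ∧ modelIntensity N N' μ z t y ≤ B) :
    ∀ z ∈ ΘK, ∀ z' ∈ ΘK,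
      ⟪expectVec N N' h Λ (fun y => Ghat N N' h μ z y)
          - expectVec N N' h Λ (fun y => Ghat N N' h μ z' y), z - z'⟫
        ≥ (Real.exp (-(h * b)) * b * h ^ 2 * Real.exp (-(B * ((N' : ℝ) * h))))
            * ‖z - z'‖ ^ 2 :=
  G_strongly_monotone_general N N' hN' h hh Λ hdep μ b B hb hstar ΘK hphys
end
end

section
/- Let λ : ℝ → ℝ be integrable on [0, T], let n ≥ 0, and let real numbers satisfy 0 = r_0 ≤ l_1 < r_1 ≤ l_2 < r_2 ≤ … ≤ l_n < r_n ≤ T. Then ∏_{k=1}^{n} [exp(−∫_{r_{k−1}}^{l_k} λ(s) ds) − exp(−∫_{r_{k−1}}^{r_k} λ(s) ds)] · exp(−∫_{r_n}^{T} λ(s) ds) = ∏_{k=1}^{n} (exp(∫_{l_k}^{r_k} λ(s) ds) − 1) · exp(−∫_{0}^{T} λ(s) ds). -/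
open scoped BigOperators

private lemma chain_nonneg (n : ℕ) (l r : ℕ → ℝ) (hr0 : r 0 = 0)
    (hord : ∀ k ∈ Finset.Icc 1 n, r (k - 1) ≤ l k ∧ l k < r k) :
    ∀ k ≤ n, 0 ≤ r k := by
  intro k hk
  induction k with
  | zero => simp [hr0]
  | succ m ih =>
    have hm : m ≤ n := Nat.le_of_succ_le hk
    have h := hord (m+1) (Finset.mem_Icc.mpr ⟨Nat.succ_le_succ (Nat.zero_le m), hk⟩)
    have hmm : r m ≤ r (m+1) := by simpa using (h.1.trans h.2.le)
    exact (ih hm).trans hmm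

/-- likelihood identity for time-uncertain event data:
for `0 = r_0 ≤ l_1 < r_1 ≤ l_2 < r_2 ≤ … ≤ l_n < r_n ≤ T` and `λ` integrable on
`[0, T]`,
`∏_{k=1}^n [e^{-∫_{r_{k-1}}^{l_k} λ} - e^{-∫_{r_{k-1}}^{r_k} λ}] · e^{-∫_{r_n}^T λ}
  = ∏_{k=1}^n (e^{∫_{l_k}^{r_k} λ} - 1) · e^{-∫_0^T λ}`. -/
theorem likelihood_identity_time_only
    (T : ℝ) (f : ℝ → ℝ)
    (hint : IntervalIntegrable f MeasureTheory.volume 0 T)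
    (n : ℕ) (l r : ℕ → ℝ)
    (hr0 : r 0 = 0)
    (hord : ∀ k ∈ Finset.Icc 1 n, r (k - 1) ≤ l k ∧ l k < r k)
    (hrT : r n ≤ T) :
    (∏ k ∈ Finset.Icc 1 n,
        (Real.exp (-∫ s in r (k - 1)..l k, f s) - Real.exp (-∫ s in r (k - 1)..r k, f s)))
        * Real.exp (-∫ s in r n..T, f s)
      = (∏ k ∈ Finset.Icc 1 n, (Real.exp (∫ s in l k..r k, f s) - 1))
        * Real.exp (-∫ s in (0 : ℝ)..T, f s) := by
  induction n with
  | zero => simp [hr0]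
  | succ m ih =>
    have hsub : Finset.Icc 1 m ⊆ Finset.Icc 1 (m+1) :=
      Finset.Icc_subset_Icc_right (Nat.le_succ m)
    have hordm : ∀ k ∈ Finset.Icc 1 m, r (k - 1) ≤ l k ∧ l k < r k :=
      fun k hk => hord k (hsub hk)
    have hmem : (m+1) ∈ Finset.Icc 1 (m+1) :=
      Finset.mem_Icc.mpr ⟨Nat.succ_le_succ (Nat.zero_le m), le_rfl⟩
    obtain ⟨h1, h2⟩ := hord (m+1) hmem
    simp only [Nat.add_sub_cancel] at h1
    have h0rm : 0 ≤ r m := chain_nonneg m l r hr0 hordm m le_rfl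
    have hrmT : r m ≤ T := le_trans (h1.trans h2.le) hrT
    have ihm := ih hordm hrmT
    have h0T : (0:ℝ) ≤ T := h0rm.trans hrmT
    have hII : ∀ a b : ℝ, a ∈ Set.Icc (0:ℝ) T → b ∈ Set.Icc (0:ℝ) T →
        IntervalIntegrable f MeasureTheory.volume a b := by
      intro a b ha hb
      refine hint.mono_set ?_
      rw [Set.uIcc_of_le h0T]
      exact Set.uIcc_subset_Icc ha hb
    have hl' : l (m+1) ∈ Set.Icc (0:ℝ) T := ⟨h0rm.trans h1, h2.le.trans hrT⟩
    have hrm' : r m ∈ Set.Icc (0:ℝ) T := ⟨h0rm, hrmT⟩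
    have hr' : r (m+1) ∈ Set.Icc (0:ℝ) T := ⟨h0rm.trans (h1.trans h2.le), hrT⟩
    have hT' : T ∈ Set.Icc (0:ℝ) T := ⟨h0T, le_rfl⟩
    have e12 : (∫ s in r m..l (m+1), f s) + (∫ s in l (m+1)..r (m+1), f s)
        = ∫ s in r m..r (m+1), f s :=
      intervalIntegral.integral_add_adjacent_intervals (hII _ _ hrm' hl') (hII _ _ hl' hr')
    have e4 : (∫ s in r m..r (m+1), f s) + (∫ s in r (m+1)..T, f s)
        = ∫ s in r m..T, f s :=
      intervalIntegral.integral_add_adjacent_intervals (hII _ _ hrm' hr') (hII _ _ hr' hT')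
    have key : (Real.exp (-∫ s in r m..l (m+1), f s)
          - Real.exp (-∫ s in r m..r (m+1), f s))
        * Real.exp (-∫ s in r (m+1)..T, f s)
        = (Real.exp (∫ s in l (m+1)..r (m+1), f s) - 1)
          * Real.exp (-∫ s in r m..T, f s) := by
      rw [← e4, ← e12]
      simp only [neg_add, ← Real.exp_add, sub_mul, one_mul]
      ring_nf
    rw [Finset.prod_Icc_succ_top (Nat.succ_le_succ (Nat.zero_le m)),
        Finset.prod_Icc_succ_top (Nat.succ_le_succ (Nat.zero_le m))]
    simp only [Nat.add_sub_cancel]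
    linear_combination
      (∏ k ∈ Finset.Icc 1 m,
        (Real.exp (-∫ s in r (k - 1)..l k, f s) - Real.exp (-∫ s in r (k - 1)..r k, f s))) * key
      + (Real.exp (∫ s in l (m+1)..r (m+1), f s) - 1) * ihm
end

section
/- Under the physical-intensity assumption, with κ = e^{-h·b}·b·h²·e^{-B·τ_max} and C = min(B·(T+τ_max), N+N'), the Euclidean diameter of Θ_K is at most 2·C/κ: for all z₊, z₋ ∈ Θ_K, ‖z₊ − z₋‖₂ ≤ 2·C/κ. -/
open Finset
open scoped BigOperators RealInnerProductSpace

noncomputable section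

/-!
Testing the physical-intensity assumption on the trajectory with a single event at time `i`
isolates one coordinate: `Λ_t(z; 𝟙_{i}) = μ + z_{i,t}`. Hence every coordinate of a point of
`Θ_K` lies in `[b - μ, B - μ]`, so two points of `Θ_K` differ by at most `B - b` in each of
the at most `(N + N')²` coordinates, and `‖z₊ - z₋‖ ≤ (N + N') (B - b)`. It remains to see
`(B - b) κ ≤ 2 min(B h, 1)`: bounding `(B - b) b ≤ B²` and both exponentials by `e^{-B h}`
reduces this to `x² e^{-x} ≤ 2 min(x, 1)` for `x = B h`.
-/

open Real

lemma EuclideanSpace.norm_le_sqrt_card_mul {ι : Type*} [Fintype ι] {x : EuclideanSpace ℝ ι}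
    {c : ℝ} (hc : 0 ≤ c) (hx : ∀ i, |x i| ≤ c) : ‖x‖ ≤ √(Fintype.card ι) * c := by
  rw [EuclideanSpace.norm_eq]
  calc √(∑ i, ‖x i‖ ^ 2) ≤ √(∑ _ : ι, c ^ 2) := by
        gcongr with i
        exact hx i
    _ = √(Fintype.card ι) * c := by
        rw [Finset.sum_const, Finset.card_univ, nsmul_eq_mul, Real.sqrt_mul (by positivity),
          Real.sqrt_sq hc]

lemma sq_mul_exp_neg_le_two_mul_min {x : ℝ} (hx : 0 ≤ x) : x ^ 2 * exp (-x) ≤ 2 * min x 1 := by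
  have hexp : 0 < exp (-x) := exp_pos _
  rcases le_total x 1 with hx1 | hx1
  · rw [min_eq_left hx1]
    have : exp (-x) ≤ 1 := exp_le_one_iff.mpr (by linarith)
    nlinarith
  · rw [min_eq_right hx1]
    have hquad : 1 + x + x ^ 2 / 2 ≤ exp x := quadratic_le_exp_of_nonneg hx
    have hinv : exp (-x) * exp x = 1 := by rw [← exp_add, neg_add_cancel, exp_zero]
    nlinarith

lemma sub_mul_kappa_le_two_mul_min {b B h : ℝ} {N' : ℕ} (hb : 0 < b) (hbB : b ≤ B)
    (hh : 0 < h) (hN' : 1 ≤ N') :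
    (B - b) * (exp (-(h * b)) * b * h ^ 2 * exp (-(B * (N' * h)))) ≤ 2 * min (B * h) 1 := by
  have hB : 0 < B := hb.trans_le hbB
  have hBh : 0 ≤ B * h := by positivity
  have hprod : (B - b) * b ≤ B * B := by nlinarith
  have hexp : exp (-(h * b)) * exp (-(B * (N' * h))) ≤ exp (-(B * h)) := by
    rw [← exp_add, exp_le_exp]
    have : (1 : ℝ) ≤ N' := by exact_mod_cast hN'
    nlinarith
  calc (B - b) * (exp (-(h * b)) * b * h ^ 2 * exp (-(B * (N' * h))))
      = ((B - b) * b) * h ^ 2 * (exp (-(h * b)) * exp (-(B * (N' * h)))) := by ring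
    _ ≤ (B * B) * h ^ 2 * exp (-(B * h)) := by gcongr
    _ = (B * h) ^ 2 * exp (-(B * h)) := by ring
    _ ≤ 2 * min (B * h) 1 := sq_mul_exp_neg_le_two_mul_min hBh

lemma card_kIdx_le (N N' : ℕ) : (kIdx N N').card ≤ (N + N') ^ 2 :=
  calc (kIdx N N').card ≤ (Finset.Icc (-(N' : ℤ) + 1) N ×ˢ Finset.Icc (1 : ℤ) N).card :=
        Finset.card_filter_le _ _
    _ = (N + N') * N := by rw [Finset.card_product, Int.card_Icc, Int.card_Icc]; congr 1 <;> omega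
    _ ≤ (N + N') ^ 2 := by rw [sq]; exact Nat.mul_le_mul_left _ (Nat.le_add_right N N')

lemma modelIntensity_single {N N' : ℕ} (μ : ℝ) (z : Param N N') (p : kIdx N N') :
    modelIntensity N N' μ z p.1.2 (fun j => decide (j = p.1.1)) = μ + z p := by
  obtain ⟨⟨i, t⟩, hp⟩ := p
  have hi : i ∈ Finset.Icc (t - (N' : ℤ)) (t - 1) := by
    simp only [kIdx, Finset.mem_filter] at hp
    exact Finset.mem_Icc.2 hp.2
  rw [modelIntensity, Finset.sum_eq_single_of_mem i hi]
  · simp [bval, zent, hp]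
  · intro j _ hj
    simp [bval, hj]

lemma add_apply_mem_Icc_of_modelIntensity_mem_Icc {N N' : ℕ} {μ b B : ℝ} {z : Param N N'}
    (hz : ∀ t ∈ Finset.Icc (1 : ℤ) (N : ℤ), ∀ y : ℤ → Bool,
      b ≤ modelIntensity N N' μ z t y ∧ modelIntensity N N' μ z t y ≤ B)
    (p : kIdx N N') : b ≤ μ + z p ∧ μ + z p ≤ B := by
  have ht : p.1.2 ∈ Finset.Icc (1 : ℤ) N := by
    have hp := p.2
    simp only [kIdx, Finset.mem_filter, Finset.mem_product] at hp
    exact hp.1.2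
  rw [← modelIntensity_single]
  exact hz _ ht _

theorem ThetaK_diameter_bounded_general
    (N N' : ℕ) (hN' : 1 ≤ N') (h : ℝ) (hh : 0 < h)
    (μ : ℝ)
    (b B : ℝ) (hb : 0 < b) (hbB : b ≤ B)
    (ΘK : Set (Param N N'))
    (hphys : ∀ z ∈ ΘK, ∀ t ∈ Finset.Icc (1 : ℤ) (N : ℤ), ∀ y : ℤ → Bool,
      b ≤ modelIntensity N N' μ z t y ∧ modelIntensity N N' μ z t y ≤ B) :
    ∀ zp ∈ ΘK, ∀ zm ∈ ΘK,
      ‖zp - zm‖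
        ≤ 2 * (min (B * ((N : ℝ) * h + (N' : ℝ) * h)) ((N : ℝ) + (N' : ℝ)))
          / (Real.exp (-(h * b)) * b * h ^ 2 * Real.exp (-(B * ((N' : ℝ) * h)))) := by
  intro zp hzp zm hzm
  have hcoord : ∀ p, |(zp - zm) p| ≤ B - b := fun p => by
    obtain ⟨hp₁, hp₂⟩ := add_apply_mem_Icc_of_modelIntensity_mem_Icc (hphys zp hzp) p
    obtain ⟨hm₁, hm₂⟩ := add_apply_mem_Icc_of_modelIntensity_mem_Icc (hphys zm hzm) p
    rw [PiLp.sub_apply, ← add_sub_add_left_eq_sub _ _ μ]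
    exact abs_sub_le_of_le_of_le hp₁ hp₂ hm₁ hm₂
  have hsqrt_card : √(Fintype.card (kIdx N N')) ≤ (N : ℝ) + N' := by
    rw [Real.sqrt_le_left (by positivity), Fintype.card_coe]
    exact_mod_cast card_kIdx_le N N'
  have hnorm : ‖zp - zm‖ ≤ ((N : ℝ) + N') * (B - b) :=
    (EuclideanSpace.norm_le_sqrt_card_mul (sub_nonneg.2 hbB) hcoord).trans (by gcongr)
  have hmin : min (B * (N * h + N' * h)) (N + N') = min (B * h) 1 * (N + N') := by
    rw [min_mul_of_nonneg _ _ (by positivity), one_mul]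
    congr 1
    ring
  set κ := exp (-(h * b)) * b * h ^ 2 * exp (-(B * (N' * h)))
  have hκ : 0 < κ := by positivity
  rw [le_div_iff₀ hκ, hmin]
  calc ‖zp - zm‖ * κ ≤ (N + N') * (B - b) * κ := mul_le_mul_of_nonneg_right hnorm hκ.le
    _ = (N + N') * ((B - b) * κ) := mul_assoc _ _ _
    _ ≤ (N + N') * (2 * min (B * h) 1) :=
        mul_le_mul_of_nonneg_left (sub_mul_kappa_le_two_mul_min hb hbB hh hN') (by positivity)
    _ = 2 * (min (B * h) 1 * (N + N')) := by ring

/-- diameter bound for `Θ_K`: under the physical-intensity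
assumption, `‖z₊ - z₋‖ ≤ 2 C / κ` for all `z₊, z₋ ∈ Θ_K`, where
`κ = e^{-h b} b h² e^{-B τ_max}` and `C = min(B (T + τ_max), N + N')`. -/
theorem ThetaK_diameter_bounded
    (N N' : ℕ) (hN : 1 ≤ N) (hN' : 1 ≤ N') (h : ℝ) (hh : 0 < h)
    (Λ : ℤ → (ℤ → Bool) → ℝ)
    (hdep : ∀ (t : ℤ) (y y' : ℤ → Bool),
      (∀ i ∈ window N N', i < t → y i = y' i) → Λ t y = Λ t y')
    (μ : ℝ) (hμ : 0 < μ)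
    (b B : ℝ) (hb : 0 < b) (hbB : b ≤ B)
    (hstar : ∀ t ∈ window N N', ∀ y : ℤ → Bool,
      0 < seqPMF N N' h Λ y → b ≤ Λ t y ∧ Λ t y ≤ B)
    (ΘK : Set (Param N N')) (hne : ΘK.Nonempty)
    (hcomp : IsCompact ΘK) (hconv : Convex ℝ ΘK)
    (zstar : Param N N') (hzs : zstar ∈ ΘK)
    (htrue : ∀ t ∈ Finset.Icc (1 : ℤ) (N : ℤ), ∀ y : ℤ → Bool,
      Λ t y = modelIntensity N N' μ zstar t y)
    (hphys : ∀ z ∈ ΘK, ∀ t ∈ Finset.Icc (1 : ℤ) (N : ℤ), ∀ y : ℤ → Bool,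
      b ≤ modelIntensity N N' μ z t y ∧ modelIntensity N N' μ z t y ≤ B) :
    ∀ zp ∈ ΘK, ∀ zm ∈ ΘK,
      ‖zp - zm‖
        ≤ 2 * (min (B * ((N : ℝ) * h + (N' : ℝ) * h)) ((N : ℝ) + (N' : ℝ)))
          / (Real.exp (-(h * b)) * b * h ^ 2 * Real.exp (-(B * ((N' : ℝ) * h)))) :=
  ThetaK_diameter_bounded_general N N' hN' h hh μ b B hb hbB ΘK hphys
end
end

section
/- Let V be a finite set, N ≥ 1 an integer, h > 0, T = N·h, and I_j = ((j−1)·h, j·h] for 1 ≤ j ≤ N. Let λ : ℝ × V → ℝ satisfy λ(t, u) = Λ_j(u) for all t ∈ I_j and u ∈ V, set λ̄(t) = Σ_{u∈V} λ(t, u) and Λ̄_j = Σ_{u∈V} Λ_j(u), and assume Λ̄_j > 0 for every j. Fix event indices 1 ≤ j(1) < … < j(n) ≤ N and nodes u_1, …, u_n ∈ V. Then exp(−∫_{0}^{T} λ̄(s) ds) · ∏_{k=1}^{n} ∫_{(j(k)−1)h}^{j(k)h} λ(t, u_k)·exp(∫_{t}^{j(k)h} λ̄(s) ds) dt = exp(−h·Σ_{j=1}^{N}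 Λ̄_j) · ∏_{k=1}^{n} (e^{h·Λ̄_{j(k)}} − 1)·Λ_{j(k)}(u_k)/Λ̄_{j(k)}. -/
/-!
On a cell `I_j` the total intensity is the constant `Λ̄_j`, so the tail integral
`∫_t^{jh} λ̄` equals `(jh - t) Λ̄_j` and each window integral reduces to the elementary
`∫_{I_j} Λ_j(u) e^{Λ̄_j (jh - t)} dt = (e^{h Λ̄_j} - 1) Λ_j(u) / Λ̄_j`, while the
compensator `∫_0^T λ̄` splits over the `N` cells into `h ∑_j Λ̄_j`.
-/

open Set

namespace intervalIntegral

theorem integral_eq_sub_mul_of_eqOn_Ioc {f : ℝ → ℝ} {a b c : ℝ} (hab : a ≤ b)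
    (hf : EqOn f (fun _ => c) (Ioc a b)) : ∫ x in a..b, f x = (b - a) * c := by
  rw [integral_congr_ae (g := fun _ => c) (.of_forall fun x hx => hf (uIoc_of_le hab ▸ hx))]
  simp

theorem intervalIntegrable_of_eqOn_Ioc {f : ℝ → ℝ} {a b c : ℝ} (hab : a ≤ b)
    (hf : EqOn f (fun _ => c) (Ioc a b)) : IntervalIntegrable f MeasureTheory.volume a b :=
  (intervalIntegrable_congr (uIoc_of_le hab ▸ hf)).2 intervalIntegrable_const

theorem integral_const_mul_exp_mul_sub (C c a b : ℝ) (hc : c ≠ 0) :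
    ∫ t in a..b, C * Real.exp (c * (b - t)) = (Real.exp (c * (b - a)) - 1) * C / c := by
  rw [integral_const_mul, integral_comp_sub_left (fun x => Real.exp (c * x)) b,
    integral_comp_mul_left Real.exp hc, integral_exp]
  simp only [sub_self, mul_zero, Real.exp_zero, smul_eq_mul]
  field_simp

theorem integral_mul_exp_integral_of_eqOn_Ioc {f g : ℝ → ℝ} {a b c C : ℝ} (hab : a ≤ b)
    (hc : c ≠ 0) (hf : EqOn f (fun _ => c) (Ioc a b)) (hg : EqOn g (fun _ => C) (Ioc a b)) :
    ∫ t in a..b, g t * Real.exp (∫ s in t..b, f s) = (Real.exp (c * (b - a)) - 1) * C / c := by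
  rw [← integral_const_mul_exp_mul_sub C c a b hc]
  refine integral_congr_ae (.of_forall fun t ht => ?_)
  rw [uIoc_of_le hab] at ht
  rw [hg ht, integral_eq_sub_mul_of_eqOn_Ioc ht.2 (hf.mono (Ioc_subset_Ioc_left ht.1.le)),
    mul_comm c]

theorem integral_zero_natCast_mul_eq_sum_of_eqOn_Ioc {f : ℝ → ℝ} {F : ℕ → ℝ} {h : ℝ}
    (hh : 0 ≤ h) (N : ℕ)
    (hf : ∀ j ∈ Finset.Icc 1 N, EqOn f (fun _ => F j) (Ioc (((j : ℝ) - 1) * h) (j * h))) :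
    ∫ s in (0 : ℝ)..N * h, f s = h * ∑ j ∈ Finset.Icc 1 N, F j := by
  have hcell (j : ℕ) : ((j : ℝ) - 1) * h ≤ j * h := by nlinarith
  have hsum := sum_integral_adjacent_intervals_Ico (μ := MeasureTheory.volume) (f := f)
    (a := fun j : ℕ => ((j : ℝ) - 1) * h) (Nat.le_add_left 1 N) fun j hj => by
      simp only [Nat.cast_add, Nat.cast_one, add_sub_cancel_right]
      exact intervalIntegrable_of_eqOn_Ioc (hcell j)
        (hf j (Finset.mem_Icc.2 ⟨hj.1, Nat.lt_succ_iff.1 hj.2⟩))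
  simp only [Nat.cast_add, Nat.cast_one, add_sub_cancel_right, sub_self, zero_mul] at hsum
  rw [← hsum, Finset.Ico_add_one_right_eq_Icc, Finset.mul_sum]
  refine Finset.sum_congr rfl fun j hj => ?_
  rw [integral_eq_sub_mul_of_eqOn_Ioc (hcell j) (hf j hj)]
  ring

end intervalIntegral

theorem discrete_time_likelihood_network_general
    {V : Type*} [Fintype V] (N : ℕ) (h : ℝ) (hh : 0 < h)
    (lam : ℝ → V → ℝ) (Λ : ℕ → V → ℝ)
    (hpc : ∀ j ∈ Finset.Icc 1 N, ∀ u : V,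
      ∀ t ∈ Set.Ioc (((j : ℝ) - 1) * h) ((j : ℝ) * h), lam t u = Λ j u)
    (hpos : ∀ j ∈ Finset.Icc 1 N, 0 < ∑ u : V, Λ j u)
    (n : ℕ) (jf : ℕ → ℕ) (us : ℕ → V)
    (hj : ∀ m ∈ Finset.Icc 1 n, 1 ≤ jf m ∧ jf m ≤ N) :
    Real.exp (-∫ s in (0 : ℝ)..((N : ℝ) * h), ∑ u : V, lam s u)
        * ∏ k ∈ Finset.Icc 1 n,
            ∫ t in (((jf k : ℝ) - 1) * h)..((jf k : ℝ) * h),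
              lam t (us k) * Real.exp (∫ s in t..((jf k : ℝ) * h), ∑ u : V, lam s u)
      = Real.exp (-(h * ∑ j ∈ Finset.Icc 1 N, ∑ u : V, Λ j u))
        * ∏ k ∈ Finset.Icc 1 n,
            (Real.exp (h * ∑ u : V, Λ (jf k) u) - 1)
              * Λ (jf k) (us k) / (∑ u : V, Λ (jf k) u) := by
  have htotal : ∀ j ∈ Finset.Icc 1 N, EqOn (fun s => ∑ u : V, lam s u)
      (fun _ => ∑ u : V, Λ j u) (Ioc (((j : ℝ) - 1) * h) (j * h)) :=
    fun j hjN t ht => Finset.sum_congr rfl fun u _ => hpc j hjN u t ht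
  rw [intervalIntegral.integral_zero_natCast_mul_eq_sum_of_eqOn_Ioc hh.le N htotal]
  congr 1
  refine Finset.prod_congr rfl fun k hk => ?_
  have hjk : jf k ∈ Finset.Icc 1 N := Finset.mem_Icc.2 (hj k hk)
  rw [intervalIntegral.integral_mul_exp_integral_of_eqOn_Ioc (by linarith) (hpos _ hjk).ne'
    (htotal _ hjk) fun t ht => hpc _ hjk (us k) t ht]
  ring_nf

/-- discrete-time likelihood on a network: if `λ(t, u)` is
piecewise constant in time, equal to `Λ_j(u)` on `I_j = ((j-1)h, jh]`, with
`Λ̄_j = ∑_u Λ_j(u) > 0`, then for events at grid windows `I_{j(k)}` with nodes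
`u_k`,
`e^{-∫_0^T λ̄} ∏_k ∫_{I_{j(k)}} λ(t, u_k) e^{∫_t^{j(k)h} λ̄} dt
  = e^{-h ∑_j Λ̄_j} ∏_k (e^{h Λ̄_{j(k)}} - 1) Λ_{j(k)}(u_k) / Λ̄_{j(k)}`. -/
theorem discrete_time_likelihood_network
    {V : Type*} [Fintype V] (N : ℕ) (hN : 1 ≤ N) (h : ℝ) (hh : 0 < h)
    (lam : ℝ → V → ℝ) (Λ : ℕ → V → ℝ)
    (hpc : ∀ j ∈ Finset.Icc 1 N, ∀ u : V,
      ∀ t ∈ Set.Ioc (((j : ℝ) - 1) * h) ((j : ℝ) * h), lam t u = Λ j u)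
    (hpos : ∀ j ∈ Finset.Icc 1 N, 0 < ∑ u : V, Λ j u)
    (n : ℕ) (jf : ℕ → ℕ) (us : ℕ → V)
    (hj : ∀ m ∈ Finset.Icc 1 n, 1 ≤ jf m ∧ jf m ≤ N)
    (hmono : ∀ m m' : ℕ, 1 ≤ m → m < m' → m' ≤ n → jf m < jf m') :
    Real.exp (-∫ s in (0 : ℝ)..((N : ℝ) * h), ∑ u : V, lam s u)
        * ∏ k ∈ Finset.Icc 1 n,
            ∫ t in (((jf k : ℝ) - 1) * h)..((jf k : ℝ) * h),
              lam t (us k) * Real.exp (∫ s in t..((jf k : ℝ) * h), ∑ u : V, lam s u)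
      = Real.exp (-(h * ∑ j ∈ Finset.Icc 1 N, ∑ u : V, Λ j u))
        * ∏ k ∈ Finset.Icc 1 n,
            (Real.exp (h * ∑ u : V, Λ (jf k) u) - 1)
              * Λ (jf k) (us k) / (∑ u : V, Λ (jf k) u) :=
  discrete_time_likelihood_network_general N h hh lam Λ hpc hpos n jf us hj
end
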